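/- arXiv:2602.15445 — 6 statements merged into one kernel-verified Lean document; each statement's English description precedes it below -/
import Mathlib

section
/- Let m, n, p ∈ ℕ, let Q, S, R ∈ ℝ^{m,m} with Q = Qᵀ and R = Rᵀ, and let H : ℝⁿ → ℝ. Let z, w ∈ ℝⁿ, τ > 0, ū ∈ ℝᵐ, and let Ḡ ∈ ℝⁿ, f̄ ∈ ℝⁿ, B̄ ∈ ℝ^{n,m}, D̄ ∈ ℝ^{m,m}, ℓ̄ ∈ ℝᵖ, W̄ ∈ ℝ^{p,m} satisfy: (i) the mean value property H(w) − H(z) = Ḡᵀ(w − z); (ii) W̄ᵀW̄ = R + D̄ᵀS + SᵀD̄ + D̄ᵀQD̄; (iii) QD̄ + S is invertible; (iv) Ḡ ≠ 0. Define h̄ = (QD̄ + S)⁻ᵀ (½ B̄ᵀ Ḡ + W̄ᵀ ℓ̄), γ̄ = (h̄ᵀQh̄ − ‖ℓ̄‖²)/‖Ḡ‖², and ȳ = h̄ + D̄ū. If the scheme equation (w − z)/τ = γ̄ Ḡ + (I − Ḡ Ḡᵀ/‖Ḡ‖²) f̄ + B̄ ū holds, then the discrete power balance (H(w) − H(z))/τ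 = ȳᵀQȳ + 2 ȳᵀSū + ūᵀRū − ‖ℓ̄ + W̄ū‖² holds. -/
open Matrix

/-- One step of the discrete gradient method for QSR-dissipative systems
satisfies the discrete power balance.  Squared Euclidean norms `‖v‖²` are written as
dot products `v ⬝ᵥ v`, and `I − Ḡ Ḡᵀ/‖Ḡ‖²` is the matrix `1 - (Ḡ ⬝ᵥ Ḡ)⁻¹ • vecMulVec Ḡ Ḡ`. -/
theorem discrete_power_balance
    {m n p : ℕ}
    (Q S R : Matrix (Fin m) (Fin m) ℝ)
    (hQsym : Q = Qᵀ) (hRsym : R = Rᵀ)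
    (H : (Fin n → ℝ) → ℝ)
    (z w : Fin n → ℝ) (τ : ℝ) (hτ : 0 < τ)
    (ubar : Fin m → ℝ)
    (Gbar fbar : Fin n → ℝ)
    (Bbar : Matrix (Fin n) (Fin m) ℝ)
    (Dbar : Matrix (Fin m) (Fin m) ℝ)
    (lbar : Fin p → ℝ)
    (Wbar : Matrix (Fin p) (Fin m) ℝ)
    -- (i) mean value property
    (hmv : H w - H z = Gbar ⬝ᵥ (w - z))
    -- (ii) W̄ᵀW̄ = R + D̄ᵀS + SᵀD̄ + D̄ᵀQD̄
    (hW : Wbarᵀ * Wbar = R + Dbarᵀ * S + Sᵀ * Dbar + Dbarᵀ * Q * Dbar)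
    -- (iii) QD̄ + S invertible
    (hinv : IsUnit (Q * Dbar + S).det)
    -- (iv) Ḡ ≠ 0
    (hG : Gbar ≠ 0)
    -- definitions of h̄, γ̄, ȳ
    (hbar : Fin m → ℝ)
    (hh : hbar = ((Q * Dbar + S)ᵀ)⁻¹ *ᵥ ((1 / 2 : ℝ) • (Bbarᵀ *ᵥ Gbar) + Wbarᵀ *ᵥ lbar))
    (γbar : ℝ)
    (hγ : γbar = (hbar ⬝ᵥ (Q *ᵥ hbar) - lbar ⬝ᵥ lbar) / (Gbar ⬝ᵥ Gbar))
    (ybar : Fin m → ℝ)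
    (hy : ybar = hbar + Dbar *ᵥ ubar)
    -- the scheme equation
    (hscheme : (1 / τ) • (w - z) =
      γbar • Gbar
      + ((1 : Matrix (Fin n) (Fin n) ℝ) - (Gbar ⬝ᵥ Gbar)⁻¹ • vecMulVec Gbar Gbar) *ᵥ fbar
      + Bbar *ᵥ ubar) :
    (H w - H z) / τ =
      ybar ⬝ᵥ (Q *ᵥ ybar) + 2 * (ybar ⬝ᵥ (S *ᵥ ubar)) + ubar ⬝ᵥ (R *ᵥ ubar)
        - (lbar + Wbar *ᵥ ubar) ⬝ᵥ (lbar + Wbar *ᵥ ubar) := by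

  have swap : ∀ {k l : ℕ} (v : Fin k → ℝ) (M : Matrix (Fin k) (Fin l) ℝ) (x : Fin l → ℝ),
      v ⬝ᵥ M *ᵥ x = (Mᵀ *ᵥ v) ⬝ᵥ x := by
    intro k l v M x
    rw [dotProduct_mulVec, mulVec_transpose]
  have hGG : Gbar ⬝ᵥ Gbar ≠ 0 := by
    intro h
    exact hG (dotProduct_self_eq_zero.mp h)
  have key : (Q * Dbar + S)ᵀ *ᵥ hbar = (1 / 2 : ℝ) • (Bbarᵀ *ᵥ Gbar) + Wbarᵀ *ᵥ lbar := by
    rw [hh, mulVec_mulVec, Matrix.mul_nonsing_inv, one_mulVec]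
    rwa [det_transpose]
  have vmv : ∀ x : Fin n → ℝ, vecMulVec Gbar Gbar *ᵥ x = (Gbar ⬝ᵥ x) • Gbar := by
    intro x
    funext i
    simp [mulVec, vecMulVec_apply, dotProduct, Finset.mul_sum, mul_assoc, mul_comm,
      mul_left_comm]
  -- step 1 : dot the scheme with Gbar
  have e1 : (1 / τ) * (Gbar ⬝ᵥ (w - z)) = γbar * (Gbar ⬝ᵥ Gbar) + Gbar ⬝ᵥ (Bbar *ᵥ ubar) := by
    have := congrArg (fun v => Gbar ⬝ᵥ v) hscheme
    simp only [dotProduct_add, dotProduct_smul, sub_mulVec, one_mulVec, smul_mulVec,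
      vmv, smul_smul, dotProduct_sub, smul_eq_mul] at this
    rw [dotProduct_sub, this]
    field_simp
    ring
  -- step 2 : key dotted with ubar
  have e2 : hbar ⬝ᵥ (Q *ᵥ (Dbar *ᵥ ubar)) + hbar ⬝ᵥ (S *ᵥ ubar)
      = (1 / 2 : ℝ) * (Gbar ⬝ᵥ (Bbar *ᵥ ubar)) + (Wbarᵀ *ᵥ lbar) ⬝ᵥ ubar := by
    have h1 : hbar ⬝ᵥ ((Q * Dbar + S) *ᵥ ubar) = ((Q * Dbar + S)ᵀ *ᵥ hbar) ⬝ᵥ ubar :=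
      swap _ _ _
    rw [key] at h1
    have h2 : (Bbarᵀ *ᵥ Gbar) ⬝ᵥ ubar = Gbar ⬝ᵥ (Bbar *ᵥ ubar) := (swap _ _ _).symm
    simp only [add_mulVec, dotProduct_add, add_dotProduct, smul_dotProduct, smul_eq_mul,
      ← mulVec_mulVec] at h1 ⊢
    rw [h1, h2]
  -- step 3 : hW dotted
  have e3 : (Wbar *ᵥ ubar) ⬝ᵥ (Wbar *ᵥ ubar)
      = ubar ⬝ᵥ (R *ᵥ ubar) + 2 * ((Dbar *ᵥ ubar) ⬝ᵥ (S *ᵥ ubar))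
        + (Dbar *ᵥ ubar) ⬝ᵥ (Q *ᵥ (Dbar *ᵥ ubar)) := by
    have h1 : ubar ⬝ᵥ ((Wbarᵀ * Wbar) *ᵥ ubar)
        = ubar ⬝ᵥ ((R + Dbarᵀ * S + Sᵀ * Dbar + Dbarᵀ * Q * Dbar) *ᵥ ubar) := by rw [hW]
    have hL : ubar ⬝ᵥ ((Wbarᵀ * Wbar) *ᵥ ubar) = (Wbar *ᵥ ubar) ⬝ᵥ (Wbar *ᵥ ubar) := by
      rw [← mulVec_mulVec, swap, transpose_transpose]
    have hDS : ubar ⬝ᵥ ((Dbarᵀ * S) *ᵥ ubar) = (Dbar *ᵥ ubar) ⬝ᵥ (S *ᵥ ubar) := by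
      rw [← mulVec_mulVec, swap, transpose_transpose]
    have hSD : ubar ⬝ᵥ ((Sᵀ * Dbar) *ᵥ ubar) = (Dbar *ᵥ ubar) ⬝ᵥ (S *ᵥ ubar) := by
      rw [← mulVec_mulVec, swap, transpose_transpose, dotProduct_comm]
    have hDQD : ubar ⬝ᵥ ((Dbarᵀ * Q * Dbar) *ᵥ ubar)
        = (Dbar *ᵥ ubar) ⬝ᵥ (Q *ᵥ (Dbar *ᵥ ubar)) := by
      rw [Matrix.mul_assoc, ← mulVec_mulVec, swap, transpose_transpose, ← mulVec_mulVec]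
    rw [hL] at h1
    simp only [add_mulVec, dotProduct_add] at h1
    rw [hDS, hSD, hDQD] at h1
    rw [h1]; ring
  -- symmetry of Q
  have e4 : (Dbar *ᵥ ubar) ⬝ᵥ (Q *ᵥ hbar) = hbar ⬝ᵥ (Q *ᵥ (Dbar *ᵥ ubar)) := by
    rw [swap, ← hQsym, dotProduct_comm]
  -- ℓ term
  have e5 : lbar ⬝ᵥ (Wbar *ᵥ ubar) = (Wbarᵀ *ᵥ lbar) ⬝ᵥ ubar := swap _ _ _
  -- γ term
  have e6 : γbar * (Gbar ⬝ᵥ Gbar) = hbar ⬝ᵥ (Q *ᵥ hbar) - lbar ⬝ᵥ lbar := by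
    rw [hγ]; field_simp
  -- assemble
  have lhs : (H w - H z) / τ = γbar * (Gbar ⬝ᵥ Gbar) + Gbar ⬝ᵥ (Bbar *ᵥ ubar) := by
    rw [hmv, div_eq_mul_inv, mul_comm, ← one_div, e1]
  rw [lhs, e6, hy]
  simp only [mulVec_add, dotProduct_add, add_dotProduct]
  rw [e4]
  rw [dotProduct_comm (Wbar *ᵥ ubar) lbar]
  rw [e3, e5]
  linear_combination (-2:ℝ) * e2
end

section
/- Let m, n, p ∈ ℕ, let Q, S, R ∈ ℝ^{m,m} with Q = Qᵀ and R = Rᵀ, and let H : ℝⁿ → ℝ. Let z, w ∈ ℝⁿ, τ > 0, ū ∈ ℝᵐ, and let Ḡ ∈ ℝⁿ, f̄ ∈ ℝⁿ, B̄ ∈ ℝ^{n,m}, D̄ ∈ ℝ^{m,m}, ℓ̄ ∈ ℝᵖ, W̄ ∈ ℝ^{p,m} satisfy: (i) H(w) − H(z) = Ḡᵀ(w − z); (ii) W̄ᵀW̄ = R + D̄ᵀS + SᵀD̄ + D̄ᵀQD̄; (iii) QD̄ + S is invertible; (iv) Ḡ ≠ 0. Define h̄ = (QD̄ + S)⁻ᵀ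 (½ B̄ᵀ Ḡ + W̄ᵀ ℓ̄), γ̄ = (h̄ᵀQh̄ − ‖ℓ̄‖²)/‖Ḡ‖², and ȳ = h̄ + D̄ū. If (w − z)/τ = γ̄ Ḡ + (I − Ḡ Ḡᵀ/‖Ḡ‖²) f̄ + B̄ ū, then the discrete dissipation inequality H(w) ≤ H(z) + τ (ȳᵀQȳ + 2 ȳᵀSū + ūᵀRū) holds. -/
open Matrix

lemma vecMulVec_mulVec' {k l : ℕ} (a : Fin k → ℝ) (b c : Fin l → ℝ) :
    vecMulVec a b *ᵥ c = (b ⬝ᵥ c) • a := by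
  funext i
  simp [vecMulVec_apply, mulVec, dotProduct, Finset.sum_mul, Finset.mul_sum,
    mul_comm, mul_assoc, mul_left_comm]

/-- One step of the discrete gradient method for QSR-dissipative systems
satisfies the discrete dissipation inequality.  Squared Euclidean norms `‖v‖²` are written
as dot products `v ⬝ᵥ v`, and `I − Ḡ Ḡᵀ/‖Ḡ‖²` is the matrix
`1 - (Ḡ ⬝ᵥ Ḡ)⁻¹ • vecMulVec Ḡ Ḡ`. -/
theorem discrete_dissipation_inequality
    {m n p : ℕ}
    (Q S R : Matrix (Fin m) (Fin m) ℝ)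
    (hQsym : Q = Qᵀ) (hRsym : R = Rᵀ)
    (H : (Fin n → ℝ) → ℝ)
    (z w : Fin n → ℝ) (τ : ℝ) (hτ : 0 < τ)
    (ubar : Fin m → ℝ)
    (Gbar fbar : Fin n → ℝ)
    (Bbar : Matrix (Fin n) (Fin m) ℝ)
    (Dbar : Matrix (Fin m) (Fin m) ℝ)
    (lbar : Fin p → ℝ)
    (Wbar : Matrix (Fin p) (Fin m) ℝ)
    -- (i) mean value property
    (hmv : H w - H z = Gbar ⬝ᵥ (w - z))
    -- (ii) W̄ᵀW̄ = R + D̄ᵀS + SᵀD̄ + D̄ᵀQD̄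
    (hW : Wbarᵀ * Wbar = R + Dbarᵀ * S + Sᵀ * Dbar + Dbarᵀ * Q * Dbar)
    -- (iii) QD̄ + S invertible
    (hinv : IsUnit (Q * Dbar + S).det)
    -- (iv) Ḡ ≠ 0
    (hG : Gbar ≠ 0)
    -- definitions of h̄, γ̄, ȳ
    (hbar : Fin m → ℝ)
    (hh : hbar = ((Q * Dbar + S)ᵀ)⁻¹ *ᵥ ((1 / 2 : ℝ) • (Bbarᵀ *ᵥ Gbar) + Wbarᵀ *ᵥ lbar))
    (γbar : ℝ)
    (hγ : γbar = (hbar ⬝ᵥ (Q *ᵥ hbar) - lbar ⬝ᵥ lbar) / (Gbar ⬝ᵥ Gbar))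
    (ybar : Fin m → ℝ)
    (hy : ybar = hbar + Dbar *ᵥ ubar)
    -- the scheme equation
    (hscheme : (1 / τ) • (w - z) =
      γbar • Gbar
      + ((1 : Matrix (Fin n) (Fin n) ℝ) - (Gbar ⬝ᵥ Gbar)⁻¹ • vecMulVec Gbar Gbar) *ᵥ fbar
      + Bbar *ᵥ ubar) :
    H w ≤ H z + τ * (ybar ⬝ᵥ (Q *ᵥ ybar) + 2 * (ybar ⬝ᵥ (S *ᵥ ubar)) + ubar ⬝ᵥ (R *ᵥ ubar)) := by
  have hg2 : Gbar ⬝ᵥ Gbar ≠ 0 := by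
    simpa [dotProduct_self_eq_zero] using hG
  set g2 := Gbar ⬝ᵥ Gbar with hg2def
  -- projection kills fbar in the direction of Gbar
  have hproj : Gbar ⬝ᵥ (((1 : Matrix (Fin n) (Fin n) ℝ) - g2⁻¹ • vecMulVec Gbar Gbar) *ᵥ fbar) = 0 := by
    rw [sub_mulVec, one_mulVec, smul_mulVec, vecMulVec_mulVec']
    rw [dotProduct_sub, dotProduct_smul, dotProduct_smul]
    simp only [smul_eq_mul]
    field_simp
    rw [← hg2def]; ring
  -- recover w - z from the scheme
  have hwz : w - z = τ • (γbar • Gbar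
      + ((1 : Matrix (Fin n) (Fin n) ℝ) - g2⁻¹ • vecMulVec Gbar Gbar) *ᵥ fbar
      + Bbar *ᵥ ubar) := by
    rw [← hscheme, smul_smul]
    field_simp
    rw [one_smul]
  -- key scalar identity A1
  have A1 : Gbar ⬝ᵥ (w - z) = τ * (γbar * g2 + Gbar ⬝ᵥ (Bbar *ᵥ ubar)) := by
    rw [hwz, dotProduct_smul, dotProduct_add, dotProduct_add, dotProduct_smul, hproj]
    simp [mul_comm, dotProduct_comm]
    exact Or.inl (Or.inl hg2def.symm)
  -- A2
  have A2 : γbar * g2 = hbar ⬝ᵥ (Q *ᵥ hbar) - lbar ⬝ᵥ lbar := by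
    rw [hγ]; field_simp
  -- (Q*Dbar+S)ᵀ *ᵥ hbar = (1/2) • (Bbarᵀ *ᵥ Gbar) + Wbarᵀ *ᵥ lbar
  have hinvT : IsUnit ((Q * Dbar + S)ᵀ).det := by rwa [det_transpose]
  have hMh : (Q * Dbar + S)ᵀ *ᵥ hbar = (1 / 2 : ℝ) • (Bbarᵀ *ᵥ Gbar) + Wbarᵀ *ᵥ lbar := by
    rw [hh, mulVec_mulVec, mul_nonsing_inv _ hinvT, one_mulVec]
  -- A3
  have hBG : Bbarᵀ *ᵥ Gbar = (2 : ℝ) • ((Q * Dbar + S)ᵀ *ᵥ hbar) - (2 : ℝ) • (Wbarᵀ *ᵥ lbar) := by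
    rw [hMh]; funext i; simp
  have A3 : Gbar ⬝ᵥ (Bbar *ᵥ ubar)
      = 2 * (hbar ⬝ᵥ ((Q * Dbar + S) *ᵥ ubar)) - 2 * (lbar ⬝ᵥ (Wbar *ᵥ ubar)) := by
    have h1 : Gbar ⬝ᵥ (Bbar *ᵥ ubar) = (Bbarᵀ *ᵥ Gbar) ⬝ᵥ ubar := by
      rw [dotProduct_mulVec, mulVec_transpose]
    have h2 : ((Q * Dbar + S)ᵀ *ᵥ hbar) ⬝ᵥ ubar = hbar ⬝ᵥ ((Q * Dbar + S) *ᵥ ubar) := by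
      rw [mulVec_transpose, ← dotProduct_mulVec]
    have h3 : (Wbarᵀ *ᵥ lbar) ⬝ᵥ ubar = lbar ⬝ᵥ (Wbar *ᵥ ubar) := by
      rw [mulVec_transpose, ← dotProduct_mulVec]
    rw [h1, hBG, sub_dotProduct, smul_dotProduct, smul_dotProduct, h2, h3]
    simp only [smul_eq_mul]
  -- symmetry helper
  have symdot : ∀ (A : Matrix (Fin m) (Fin m) ℝ), A = Aᵀ →
      ∀ x y : Fin m → ℝ, x ⬝ᵥ (A *ᵥ y) = y ⬝ᵥ (A *ᵥ x) := by
    intro A hA x y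
    rw [dotProduct_mulVec, dotProduct_comm]
    nth_rewrite 2 [hA]
    rw [mulVec_transpose]
  set e : Fin p → ℝ := Wbar *ᵥ ubar + lbar with he
  -- A4 : supply rate expansion
  have A4 : ybar ⬝ᵥ (Q *ᵥ ybar) + 2 * (ybar ⬝ᵥ (S *ᵥ ubar)) + ubar ⬝ᵥ (R *ᵥ ubar)
      = hbar ⬝ᵥ (Q *ᵥ hbar) + 2 * (hbar ⬝ᵥ ((Q * Dbar + S) *ᵥ ubar))
        - 2 * (lbar ⬝ᵥ (Wbar *ᵥ ubar)) - lbar ⬝ᵥ lbar + e ⬝ᵥ e := by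
    have hee : e ⬝ᵥ e = ubar ⬝ᵥ ((Wbarᵀ * Wbar) *ᵥ ubar) + 2 * (lbar ⬝ᵥ (Wbar *ᵥ ubar))
        + lbar ⬝ᵥ lbar := by
      have hWW : (Wbar *ᵥ ubar) ⬝ᵥ (Wbar *ᵥ ubar) = ubar ⬝ᵥ ((Wbarᵀ * Wbar) *ᵥ ubar) := by
        rw [dotProduct_mulVec, ← mulVec_transpose, mulVec_mulVec, dotProduct_comm]
      rw [he, dotProduct_add, add_dotProduct, add_dotProduct, hWW,
        dotProduct_comm (Wbar *ᵥ ubar) lbar]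
      ring
    have hQy : ybar ⬝ᵥ (Q *ᵥ ybar)
        = hbar ⬝ᵥ (Q *ᵥ hbar) + 2 * (hbar ⬝ᵥ (Q *ᵥ (Dbar *ᵥ ubar)))
          + (Dbar *ᵥ ubar) ⬝ᵥ (Q *ᵥ (Dbar *ᵥ ubar)) := by
      rw [hy, mulVec_add, dotProduct_add, add_dotProduct, add_dotProduct,
        symdot Q hQsym (Dbar *ᵥ ubar) hbar]
      ring
    have hSy : ybar ⬝ᵥ (S *ᵥ ubar) = hbar ⬝ᵥ (S *ᵥ ubar) + (Dbar *ᵥ ubar) ⬝ᵥ (S *ᵥ ubar) := by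
      rw [hy, add_dotProduct]
    have hQD : hbar ⬝ᵥ (Q *ᵥ (Dbar *ᵥ ubar)) = hbar ⬝ᵥ ((Q * Dbar) *ᵥ ubar) := by
      rw [mulVec_mulVec]
    have hDQD : (Dbar *ᵥ ubar) ⬝ᵥ (Q *ᵥ (Dbar *ᵥ ubar))
        = ubar ⬝ᵥ ((Dbarᵀ * Q * Dbar) *ᵥ ubar) := by
      symm
      rw [Matrix.mul_assoc, ← mulVec_mulVec, dotProduct_mulVec, vecMul_transpose,
        ← mulVec_mulVec]
    have hDS : (Dbar *ᵥ ubar) ⬝ᵥ (S *ᵥ ubar) = ubar ⬝ᵥ ((Dbarᵀ * S) *ᵥ ubar) := by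
      symm
      rw [← mulVec_mulVec, dotProduct_mulVec, vecMul_transpose]
    have hDS2 : ubar ⬝ᵥ ((Dbarᵀ * S) *ᵥ ubar) = ubar ⬝ᵥ ((Sᵀ * Dbar) *ᵥ ubar) := by
      have h4 : (Dbarᵀ * S) = (Sᵀ * Dbar)ᵀ := by simp [transpose_mul]
      rw [h4, dotProduct_mulVec, vecMul_transpose, dotProduct_comm]
    have hWWexp : ubar ⬝ᵥ ((Wbarᵀ * Wbar) *ᵥ ubar)
        = ubar ⬝ᵥ (R *ᵥ ubar) + ubar ⬝ᵥ ((Dbarᵀ * S) *ᵥ ubar)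
          + ubar ⬝ᵥ ((Sᵀ * Dbar) *ᵥ ubar) + ubar ⬝ᵥ ((Dbarᵀ * Q * Dbar) *ᵥ ubar) := by
      rw [hW]
      simp [add_mulVec, dotProduct_add]
    have hMsum : hbar ⬝ᵥ ((Q * Dbar + S) *ᵥ ubar)
        = hbar ⬝ᵥ ((Q * Dbar) *ᵥ ubar) + hbar ⬝ᵥ (S *ᵥ ubar) := by
      rw [add_mulVec, dotProduct_add]
    rw [hQy, hee, hWWexp, hMsum, hQD, hDQD]
    rw [hSy, hDS, hDS2]
    ring
  -- put it together
  have hkey : H w - H z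
      = τ * (hbar ⬝ᵥ (Q *ᵥ hbar) + 2 * (hbar ⬝ᵥ ((Q * Dbar + S) *ᵥ ubar))
        - 2 * (lbar ⬝ᵥ (Wbar *ᵥ ubar)) - lbar ⬝ᵥ lbar) := by
    rw [hmv, A1, A2, A3]; ring
  have hepos : 0 ≤ e ⬝ᵥ e := by
    simp only [dotProduct]
    exact Finset.sum_nonneg fun i _ => mul_self_nonneg (e i)
  have := mul_nonneg hτ.le hepos
  rw [A4]
  nlinarith [hkey]
end

section
/- Let m, n, p ∈ ℕ and let Q, S, R ∈ ℝ^{m,m} with Q = Qᵀ and R = Rᵀ. Let η, f ∈ ℝⁿ, B ∈ ℝ^{n,m}, h ∈ ℝᵐ, D ∈ ℝ^{m,m}, ℓ ∈ ℝᵖ, W ∈ ℝ^{p,m} satisfy (i) ηᵀ f = hᵀ Q h − ‖ℓ‖², (ii) ½ ηᵀ B = hᵀ (Q D + S) − ℓᵀ W, and (iii) Wᵀ W = R + Dᵀ S + Sᵀ D + Dᵀ Q D. Then for every u ∈ ℝᵐ, setting y = h + D u, one has ηᵀ (f + B u) = yᵀ Q y + 2 yᵀ S u + uᵀ R u − ‖ℓ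 + W u‖². -/
open Matrix

/-- The pointwise Hill–Moylan conditions imply the pointwise power balance
with dissipation rate `‖ℓ + Wu‖²`.  Squared Euclidean norms `‖v‖²` are written as dot
products `v ⬝ᵥ v`, and row-vector identities are expressed via `vecMul` (`ᵥ*`). -/
theorem hill_moylan_pointwise_power_balance
    {m n p : ℕ}
    (Q S R : Matrix (Fin m) (Fin m) ℝ)
    (hQsym : Q = Qᵀ) (hRsym : R = Rᵀ)
    (η f : Fin n → ℝ)
    (B : Matrix (Fin n) (Fin m) ℝ)
    (h : Fin m → ℝ)
    (D : Matrix (Fin m) (Fin m) ℝ)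
    (l : Fin p → ℝ)
    (W : Matrix (Fin p) (Fin m) ℝ)
    -- (i) ηᵀ f = hᵀ Q h − ‖ℓ‖²
    (h1 : η ⬝ᵥ f = h ⬝ᵥ (Q *ᵥ h) - l ⬝ᵥ l)
    -- (ii) ½ ηᵀ B = hᵀ (Q D + S) − ℓᵀ W
    (h2 : (1 / 2 : ℝ) • (η ᵥ* B) = h ᵥ* (Q * D + S) - l ᵥ* W)
    -- (iii) Wᵀ W = R + Dᵀ S + Sᵀ D + Dᵀ Q D
    (h3 : Wᵀ * W = R + Dᵀ * S + Sᵀ * D + Dᵀ * Q * D) :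
    ∀ u : Fin m → ℝ, ∀ y : Fin m → ℝ, y = h + D *ᵥ u →
      η ⬝ᵥ (f + B *ᵥ u) =
        y ⬝ᵥ (Q *ᵥ y) + 2 * (y ⬝ᵥ (S *ᵥ u)) + u ⬝ᵥ (R *ᵥ u)
          - (l + W *ᵥ u) ⬝ᵥ (l + W *ᵥ u) := by
  intro u y hy
  subst hy
  have key : ∀ {k : ℕ} (A : Matrix (Fin k) (Fin m) ℝ) (v : Fin m → ℝ) (w : Fin k → ℝ),
      (A *ᵥ v) ⬝ᵥ w = v ⬝ᵥ (Aᵀ *ᵥ w) := by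
    intro k A v w
    rw [dotProduct_comm, Matrix.dotProduct_mulVec, ← Matrix.mulVec_transpose,
      dotProduct_comm]
  have e2 : η ⬝ᵥ (B *ᵥ u)
      = 2 * (h ⬝ᵥ ((Q * D) *ᵥ u)) + 2 * (h ⬝ᵥ (S *ᵥ u)) - 2 * (l ⬝ᵥ (W *ᵥ u)) := by
    have h2' := congrArg (fun v => v ⬝ᵥ u) h2
    simp only [smul_dotProduct, sub_dotProduct, smul_eq_mul,
      ← Matrix.dotProduct_mulVec, Matrix.add_mulVec, dotProduct_add] at h2'
    linarith
  have e3 : u ⬝ᵥ ((Wᵀ * W) *ᵥ u)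
      = u ⬝ᵥ (R *ᵥ u) + u ⬝ᵥ ((Dᵀ * S) *ᵥ u) + u ⬝ᵥ ((Sᵀ * D) *ᵥ u)
        + u ⬝ᵥ ((Dᵀ * Q * D) *ᵥ u) := by
    rw [h3]
    simp [Matrix.add_mulVec, dotProduct_add]
  have s1 : u ⬝ᵥ ((Sᵀ * D) *ᵥ u) = u ⬝ᵥ ((Dᵀ * S) *ᵥ u) := by
    rw [dotProduct_comm, key]
    simp [Matrix.transpose_mul]
  have s2 : (D *ᵥ u) ⬝ᵥ (Q *ᵥ h) = h ⬝ᵥ ((Q * D) *ᵥ u) := by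
    rw [key, Matrix.mulVec_mulVec, dotProduct_comm, key, Matrix.transpose_mul,
      Matrix.transpose_transpose, ← hQsym]
  have s3 : (D *ᵥ u) ⬝ᵥ ((Q * D) *ᵥ u) = u ⬝ᵥ ((Dᵀ * Q * D) *ᵥ u) := by
    rw [key, Matrix.mulVec_mulVec, ← Matrix.mul_assoc]
  have s6 : (D *ᵥ u) ⬝ᵥ (S *ᵥ u) = u ⬝ᵥ ((Dᵀ * S) *ᵥ u) := by
    rw [key, Matrix.mulVec_mulVec]
  have s4 : (W *ᵥ u) ⬝ᵥ (W *ᵥ u) = u ⬝ᵥ ((Wᵀ * W) *ᵥ u) := by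
    rw [key, Matrix.mulVec_mulVec]
  have s5 : (W *ᵥ u) ⬝ᵥ l = l ⬝ᵥ (W *ᵥ u) := dotProduct_comm _ _
  simp only [Matrix.mulVec_add, dotProduct_add, add_dotProduct,
    Matrix.mulVec_mulVec]
  rw [h1, e2]
  linarith
end

section
/- Let m, n, p ∈ ℕ, T > 0, let Q, S, R ∈ ℝ^{m,m} with Q = Qᵀ and R = Rᵀ, and let H : ℝⁿ → ℝ be continuously differentiable. Let f : ℝⁿ → ℝⁿ, B : ℝⁿ → ℝ^{n,m}, h : ℝⁿ → ℝᵐ, D : ℝⁿ → ℝ^{m,m}, ℓ : ℝⁿ → ℝᵖ, W : ℝⁿ → ℝ^{p,m} be continuous and satisfy, for every z ∈ ℝⁿ, the Hill–Moylan conditions ∇H(z)ᵀ f(z) = h(z)ᵀ Q h(z) − ‖ℓ(z)‖², ½ ∇H(z)ᵀ B(z) = h(z)ᵀ (Q D(z) + S) − ℓ(z)ᵀ W(z), and W(z)ᵀ W(z) = R + D(z)ᵀ S + Sᵀ D(z) + D(z)ᵀ Q D(z). Let u : [0,T] → ℝᵐ be continuous and let z : [0,T] → ℝⁿ be continuously differentiable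 with ż(t) = f(z(t)) + B(z(t)) u(t) for all t ∈ [0,T], and set y(t) = h(z(t)) + D(z(t)) u(t). Then for all 0 ≤ t₀ ≤ t₁ ≤ T, the energy balance H(z(t₁)) = H(z(t₀)) + ∫_{t₀}^{t₁} [y(t)ᵀ Q y(t) + 2 y(t)ᵀ S u(t) + u(t)ᵀ R u(t) − ‖ℓ(z(t)) + W(z(t)) u(t)‖²] dt holds; in particular H(z(t₁)) ≤ H(z(t₀)) + ∫_{t₀}^{t₁} [y(t)ᵀ Q y(t) + 2 y(t)ᵀ S u(t) + u(t)ᵀ R u(t)] dt. -/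
open Matrix

private lemma dp_key' {a b : Type*} [Fintype a] [Fintype b] (v : a → ℝ) (A : Matrix b a ℝ)
    (w : b → ℝ) : v ⬝ᵥ (Aᵀ *ᵥ w) = (A *ᵥ v) ⬝ᵥ w := by
  rw [dotProduct_mulVec, vecMul_transpose]

private lemma dp_self_nonneg' {a : Type*} [Fintype a] (v : a → ℝ) : 0 ≤ v ⬝ᵥ v :=
  Finset.sum_nonneg fun i _ => mul_self_nonneg _

private lemma hm_alg {m p nn : ℕ} (Q S R : Matrix (Fin m) (Fin m) ℝ)
    (hQsym : Q = Qᵀ)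
    (g ff : Fin nn → ℝ) (B : Matrix (Fin nn) (Fin m) ℝ)
    (hh : Fin m → ℝ) (D : Matrix (Fin m) (Fin m) ℝ)
    (ll : Fin p → ℝ) (W : Matrix (Fin p) (Fin m) ℝ)
    (uu : Fin m → ℝ)
    (hm1 : g ⬝ᵥ ff = hh ⬝ᵥ (Q *ᵥ hh) - ll ⬝ᵥ ll)
    (hm2 : (1 / 2 : ℝ) • (g ᵥ* B) = hh ᵥ* (Q * D + S) - ll ᵥ* W)
    (hm3 : Wᵀ * W = R + Dᵀ * S + Sᵀ * D + Dᵀ * Q * D) :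
    g ⬝ᵥ (ff + B *ᵥ uu) =
      (hh + D *ᵥ uu) ⬝ᵥ (Q *ᵥ (hh + D *ᵥ uu)) + 2 * ((hh + D *ᵥ uu) ⬝ᵥ (S *ᵥ uu))
        + uu ⬝ᵥ (R *ᵥ uu) - (ll + W *ᵥ uu) ⬝ᵥ (ll + W *ᵥ uu) := by
  have e2 : (g ᵥ* B) ⬝ᵥ uu = 2 * ((hh ᵥ* (Q * D + S) - ll ᵥ* W) ⬝ᵥ uu) := by
    rw [← hm2]; simp [smul_dotProduct]
  have e3 : uu ⬝ᵥ ((Wᵀ * W) *ᵥ uu)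
      = uu ⬝ᵥ ((R + Dᵀ * S + Sᵀ * D + Dᵀ * Q * D) *ᵥ uu) := by rw [hm3]
  have symQ : ∀ (a b : Fin m → ℝ), a ⬝ᵥ (Q *ᵥ b) = b ⬝ᵥ (Q *ᵥ a) := by
    intro a b; conv_lhs => rw [hQsym]
    rw [dp_key', dotProduct_comm]
  have eW : uu ⬝ᵥ ((Wᵀ * W) *ᵥ uu) = (W *ᵥ uu) ⬝ᵥ (W *ᵥ uu) := by
    rw [← mulVec_mulVec, dp_key']
  have eWl : ll ⬝ᵥ (W *ᵥ uu) = (ll ᵥ* W) ⬝ᵥ uu := dotProduct_mulVec ll W uu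
  have eB : g ⬝ᵥ (B *ᵥ uu) = (g ᵥ* B) ⬝ᵥ uu := dotProduct_mulVec g B uu
  have eQD : hh ⬝ᵥ (Q *ᵥ (D *ᵥ uu)) = (hh ᵥ* (Q * D)) ⬝ᵥ uu := by
    rw [dotProduct_mulVec, dotProduct_mulVec, ← vecMul_vecMul]
  have eS : hh ⬝ᵥ (S *ᵥ uu) = (hh ᵥ* S) ⬝ᵥ uu := dotProduct_mulVec hh S uu
  have eDS : uu ⬝ᵥ ((Dᵀ * S) *ᵥ uu) = (D *ᵥ uu) ⬝ᵥ (S *ᵥ uu) := by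
    rw [← mulVec_mulVec, dp_key']
  have eSD : uu ⬝ᵥ ((Sᵀ * D) *ᵥ uu) = (D *ᵥ uu) ⬝ᵥ (S *ᵥ uu) := by
    rw [← mulVec_mulVec, dp_key', dotProduct_comm, dotProduct_mulVec, ← mulVec_transpose,
      dotProduct_comm, dp_key']
  have eDQD : uu ⬝ᵥ ((Dᵀ * Q * D) *ᵥ uu) = (D *ᵥ uu) ⬝ᵥ (Q *ᵥ (D *ᵥ uu)) := by
    rw [Matrix.mul_assoc, ← mulVec_mulVec, dp_key', mulVec_mulVec]
  simp only [dotProduct_add, add_dotProduct, mulVec_add, Matrix.add_mulVec,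
    sub_dotProduct, Matrix.vecMul_add, Matrix.add_vecMul] at *
  rw [eB, e2]
  rw [symQ (D *ᵥ uu) hh]
  rw [eW] at e3
  linarith [e3, hm1, eWl, eQD, eS, eDS, eSD, eDQD, dotProduct_comm (W *ᵥ uu) ll]

/-- Sufficiency direction of the Hill–Moylan characterization: the pointwise
Hill–Moylan conditions imply the energy balance along trajectories, hence dissipativity.
The gradient `∇H` is represented by a function `gradH` satisfying
`fderiv ℝ H zz v = gradH zz ⬝ᵥ v`; squared Euclidean norms `‖v‖²` are written as dot
products `v ⬝ᵥ v`. -/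
theorem hill_moylan_energy_balance
    {m n p : ℕ} (T : ℝ) (hT : 0 < T)
    (Q S R : Matrix (Fin m) (Fin m) ℝ)
    (hQsym : Q = Qᵀ) (hRsym : R = Rᵀ)
    (H : (Fin n → ℝ) → ℝ) (hH : ContDiff ℝ 1 H)
    (gradH : (Fin n → ℝ) → Fin n → ℝ)
    (hgrad : ∀ zz : Fin n → ℝ, ∀ v : Fin n → ℝ, fderiv ℝ H zz v = gradH zz ⬝ᵥ v)
    (f : (Fin n → ℝ) → Fin n → ℝ)
    (B : (Fin n → ℝ) → Matrix (Fin n) (Fin m) ℝ)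
    (h : (Fin n → ℝ) → Fin m → ℝ)
    (D : (Fin n → ℝ) → Matrix (Fin m) (Fin m) ℝ)
    (l : (Fin n → ℝ) → Fin p → ℝ)
    (W : (Fin n → ℝ) → Matrix (Fin p) (Fin m) ℝ)
    (hf : Continuous f) (hB : Continuous B) (hh : Continuous h)
    (hD : Continuous D) (hl : Continuous l) (hW : Continuous W)
    -- Hill–Moylan conditions
    (hm1 : ∀ zz : Fin n → ℝ, gradH zz ⬝ᵥ f zz = h zz ⬝ᵥ (Q *ᵥ h zz) - l zz ⬝ᵥ l zz)
    (hm2 : ∀ zz : Fin n → ℝ,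
      (1 / 2 : ℝ) • (gradH zz ᵥ* B zz) = h zz ᵥ* (Q * D zz + S) - l zz ᵥ* W zz)
    (hm3 : ∀ zz : Fin n → ℝ,
      (W zz)ᵀ * W zz = R + (D zz)ᵀ * S + Sᵀ * D zz + (D zz)ᵀ * Q * D zz)
    -- trajectory
    (u : ℝ → Fin m → ℝ) (hu : ContinuousOn u (Set.Icc 0 T))
    (z : ℝ → Fin n → ℝ)
    (hz : ∀ t ∈ Set.Icc (0 : ℝ) T, HasDerivAt z (f (z t) + B (z t) *ᵥ u t) t)
    (y : ℝ → Fin m → ℝ)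
    (hy : ∀ t, y t = h (z t) + D (z t) *ᵥ u t) :
    ∀ t₀ t₁ : ℝ, 0 ≤ t₀ → t₀ ≤ t₁ → t₁ ≤ T →
      H (z t₁) = H (z t₀) + ∫ t in t₀..t₁,
          (y t ⬝ᵥ (Q *ᵥ y t) + 2 * (y t ⬝ᵥ (S *ᵥ u t)) + u t ⬝ᵥ (R *ᵥ u t)
            - (l (z t) + W (z t) *ᵥ u t) ⬝ᵥ (l (z t) + W (z t) *ᵥ u t))
      ∧ H (z t₁) ≤ H (z t₀) + ∫ t in t₀..t₁,
          (y t ⬝ᵥ (Q *ᵥ y t) + 2 * (y t ⬝ᵥ (S *ᵥ u t)) + u t ⬝ᵥ (R *ᵥ u t)) := by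
  intro t₀ t₁ h0 h01 h1T
  have hsubset : Set.uIcc t₀ t₁ ⊆ Set.Icc 0 T := by
    rw [Set.uIcc_of_le h01]
    exact Set.Icc_subset_Icc h0 h1T
  have hzc : ContinuousOn z (Set.Icc 0 T) :=
    fun t ht => ((hz t ht).continuousAt).continuousWithinAt
  have hqc : ContinuousOn (fun t => (z t, u t)) (Set.Icc 0 T) := hzc.prodMk hu
  -- continuity of the supply rate and dissipation as functions of (zz, uu)
  have hycont : Continuous (fun q : (Fin n → ℝ) × (Fin m → ℝ) => h q.1 + D q.1 *ᵥ q.2) :=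
    (hh.comp continuous_fst).add ((hD.comp continuous_fst).matrix_mulVec continuous_snd)
  have hF : Continuous (fun q : (Fin n → ℝ) × (Fin m → ℝ) =>
      (h q.1 + D q.1 *ᵥ q.2) ⬝ᵥ (Q *ᵥ (h q.1 + D q.1 *ᵥ q.2))
        + 2 * ((h q.1 + D q.1 *ᵥ q.2) ⬝ᵥ (S *ᵥ q.2)) + q.2 ⬝ᵥ (R *ᵥ q.2)) :=
    ((hycont.dotProduct (continuous_const.matrix_mulVec hycont)).add
      (continuous_const.mul
        (hycont.dotProduct (continuous_const.matrix_mulVec continuous_snd)))).add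
      (continuous_snd.dotProduct (continuous_const.matrix_mulVec continuous_snd))
  have hlcont : Continuous (fun q : (Fin n → ℝ) × (Fin m → ℝ) => l q.1 + W q.1 *ᵥ q.2) :=
    (hl.comp continuous_fst).add ((hW.comp continuous_fst).matrix_mulVec continuous_snd)
  have hG : Continuous (fun q : (Fin n → ℝ) × (Fin m → ℝ) =>
      (l q.1 + W q.1 *ᵥ q.2) ⬝ᵥ (l q.1 + W q.1 *ᵥ q.2)) :=
    hlcont.dotProduct hlcont
  have hsupc : ContinuousOn (fun t =>
      y t ⬝ᵥ (Q *ᵥ y t) + 2 * (y t ⬝ᵥ (S *ᵥ u t)) + u t ⬝ᵥ (R *ᵥ u t)) (Set.Icc 0 T) := by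
    have := hF.comp_continuousOn hqc
    simpa only [Function.comp_def, hy] using this
  have hdisc : ContinuousOn (fun t =>
      (l (z t) + W (z t) *ᵥ u t) ⬝ᵥ (l (z t) + W (z t) *ᵥ u t)) (Set.Icc 0 T) :=
    hG.comp_continuousOn hqc
  have hderiv : ∀ t ∈ Set.uIcc t₀ t₁, HasDerivAt (fun τ => H (z τ))
      (y t ⬝ᵥ (Q *ᵥ y t) + 2 * (y t ⬝ᵥ (S *ᵥ u t)) + u t ⬝ᵥ (R *ᵥ u t)
        - (l (z t) + W (z t) *ᵥ u t) ⬝ᵥ (l (z t) + W (z t) *ᵥ u t)) t := by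
    intro t ht
    have htI : t ∈ Set.Icc (0 : ℝ) T := hsubset ht
    have hfd : HasFDerivAt H (fderiv ℝ H (z t)) (z t) :=
      ((hH.differentiable one_ne_zero) (z t)).hasFDerivAt
    have hd := hfd.comp_hasDerivAt t (hz t htI)
    have heq : fderiv ℝ H (z t) (f (z t) + B (z t) *ᵥ u t)
        = y t ⬝ᵥ (Q *ᵥ y t) + 2 * (y t ⬝ᵥ (S *ᵥ u t)) + u t ⬝ᵥ (R *ᵥ u t)
          - (l (z t) + W (z t) *ᵥ u t) ⬝ᵥ (l (z t) + W (z t) *ᵥ u t) := by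
      rw [hgrad, hy t,
        hm_alg Q S R hQsym (gradH (z t)) (f (z t)) (B (z t)) (h (z t)) (D (z t))
          (l (z t)) (W (z t)) (u t) (hm1 (z t)) (hm2 (z t)) (hm3 (z t))]
    rw [heq] at hd
    exact hd
  have hintS : IntervalIntegrable (fun t =>
      y t ⬝ᵥ (Q *ᵥ y t) + 2 * (y t ⬝ᵥ (S *ᵥ u t)) + u t ⬝ᵥ (R *ᵥ u t)
        - (l (z t) + W (z t) *ᵥ u t) ⬝ᵥ (l (z t) + W (z t) *ᵥ u t))
      MeasureTheory.volume t₀ t₁ :=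
    ((hsupc.sub hdisc).mono hsubset).intervalIntegrable
  have hintSup : IntervalIntegrable (fun t =>
      y t ⬝ᵥ (Q *ᵥ y t) + 2 * (y t ⬝ᵥ (S *ᵥ u t)) + u t ⬝ᵥ (R *ᵥ u t))
      MeasureTheory.volume t₀ t₁ :=
    (hsupc.mono hsubset).intervalIntegrable
  have hftc := intervalIntegral.integral_eq_sub_of_hasDerivAt hderiv hintS
  constructor
  · rw [hftc]; ring
  · have hmono := intervalIntegral.integral_mono_on h01 hintS hintSup
      (fun t _ => sub_le_self _ (dp_self_nonneg' _))
    have : H (z t₁) = H (z t₀) + ∫ t in t₀..t₁,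
        (y t ⬝ᵥ (Q *ᵥ y t) + 2 * (y t ⬝ᵥ (S *ᵥ u t)) + u t ⬝ᵥ (R *ᵥ u t)
          - (l (z t) + W (z t) *ᵥ u t) ⬝ᵥ (l (z t) + W (z t) *ᵥ u t)) := by
      rw [hftc]; ring
    linarith
end

section
/- Let n ∈ ℕ and let H : ℝⁿ → ℝ be continuously differentiable. Define G : ℝⁿ × ℝⁿ → ℝⁿ by G(z, w) = ∇H((z+w)/2) + [(H(w) − H(z) − ∇H((z+w)/2)ᵀ(w − z))/‖w − z‖²] (w − z) for z ≠ w and G(z, z) = ∇H(z). Then G is continuous on ℝⁿ × ℝⁿ; in particular, G is a discrete gradient of H. -/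
open InnerProductSpace

/-- The Gonzalez discrete gradient is continuous on `ℝⁿ × ℝⁿ`; in
particular, it is a discrete gradient of `H` (continuous, mean value property,
consistency property). -/
theorem gonzalez_discrete_gradient_is_discrete_gradient
    {n : ℕ}
    (H : EuclideanSpace ℝ (Fin n) → ℝ) (hH : ContDiff ℝ 1 H)
    (G : EuclideanSpace ℝ (Fin n) → EuclideanSpace ℝ (Fin n) → EuclideanSpace ℝ (Fin n))
    (hGne : ∀ z w : EuclideanSpace ℝ (Fin n), z ≠ w →
      G z w = gradient H ((1 / 2 : ℝ) • (z + w))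
        + ((H w - H z - ⟪gradient H ((1 / 2 : ℝ) • (z + w)), w - z⟫_ℝ) / ‖w - z‖ ^ 2)
          • (w - z))
    (hGdiag : ∀ z : EuclideanSpace ℝ (Fin n), G z z = gradient H z) :
    Continuous (fun q : EuclideanSpace ℝ (Fin n) × EuclideanSpace ℝ (Fin n) => G q.1 q.2)
      ∧ (∀ z w : EuclideanSpace ℝ (Fin n), ⟪G z w, w - z⟫_ℝ = H w - H z)
      ∧ (∀ z : EuclideanSpace ℝ (Fin n), G z z = gradient H z) := by
  have hginner : ∀ (x v : EuclideanSpace ℝ (Fin n)),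
      ⟪gradient H x, v⟫_ℝ = fderiv ℝ H x v := by
    intro x v
    rw [gradient]
    exact toDual_symm_apply
  have hFcont : Continuous (fun x : EuclideanSpace ℝ (Fin n) => gradient H x) := by
    have h1 := hH.continuous_fderiv one_ne_zero
    exact (toDual ℝ (EuclideanSpace ℝ (Fin n))).symm.continuous.comp h1
  have hmidc : Continuous (fun p : EuclideanSpace ℝ (Fin n) × EuclideanSpace ℝ (Fin n) =>
      (1 / 2 : ℝ) • (p.1 + p.2)) :=
    (continuous_fst.add continuous_snd).const_smul (1 / 2 : ℝ)
  have hmid : Continuous (fun p : EuclideanSpace ℝ (Fin n) × EuclideanSpace ℝ (Fin n) =>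
      gradient H ((1 / 2 : ℝ) • (p.1 + p.2))) := hFcont.comp hmidc
  refine ⟨?_, ?_, hGdiag⟩
  · -- continuity
    rw [continuous_iff_continuousAt]
    intro q
    by_cases hq : q.1 = q.2
    · -- diagonal point
      obtain ⟨a, b⟩ := q
      simp only at hq
      subst hq
      have hstrict : HasStrictFDerivAt H (fderiv ℝ H a) a :=
        hH.contDiffAt.hasStrictFDerivAt one_ne_zero
      set D : EuclideanSpace ℝ (Fin n) × EuclideanSpace ℝ (Fin n) → ℝ := fun p =>
        2 * ‖gradient H ((1 / 2 : ℝ) • (p.1 + p.2)) - gradient H a‖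
          + ‖H p.2 - H p.1 - fderiv ℝ H a (p.2 - p.1)‖ / ‖p.2 - p.1‖ with hD
      have hbound : ∀ p : EuclideanSpace ℝ (Fin n) × EuclideanSpace ℝ (Fin n),
          ‖G p.1 p.2 - gradient H a‖ ≤ D p := by
        rintro ⟨z, w⟩
        by_cases hzw : z = w
        · subst hzw
          have hm : (1 / 2 : ℝ) • (z + z) = z := by
            rw [← two_smul ℝ z, smul_smul]; norm_num
          simp only [hD, hGdiag, hm, sub_self, map_zero, norm_zero, zero_div, add_zero]
          have := norm_nonneg (gradient H z - gradient H a)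
          linarith
        · rw [hGne z w hzw]
          have hwz : w - z ≠ 0 := sub_ne_zero.mpr (Ne.symm hzw)
          have hnorm : (0 : ℝ) < ‖w - z‖ := norm_pos_iff.mpr hwz
          set m := (1 / 2 : ℝ) • (z + w) with hm
          set N := H w - H z - ⟪gradient H m, w - z⟫_ℝ with hN
          have key : gradient H m + (N / ‖w - z‖ ^ 2) • (w - z) - gradient H a
              = (gradient H m - gradient H a) + (N / ‖w - z‖ ^ 2) • (w - z) := by abel
          rw [key]
          refine le_trans (norm_add_le _ _) ?_
          have h2 : ‖(N / ‖w - z‖ ^ 2) • (w - z)‖ = |N| / ‖w - z‖ := by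
            rw [norm_smul, Real.norm_eq_abs, abs_div, abs_pow, abs_norm, pow_two]
            field_simp
          rw [h2]
          have hNle : |N| ≤ ‖H w - H z - fderiv ℝ H a (w - z)‖
              + ‖gradient H m - gradient H a‖ * ‖w - z‖ := by
            have hdecomp : N = (H w - H z - fderiv ℝ H a (w - z))
                + ⟪gradient H a - gradient H m, w - z⟫_ℝ := by
              rw [hN, inner_sub_left, hginner a (w - z), hginner m (w - z)]
              ring
            rw [hdecomp]
            refine le_trans (abs_add_le _ _) (add_le_add ?_ ?_)
            · exact (Real.norm_eq_abs _).ge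
            · calc |⟪gradient H a - gradient H m, w - z⟫_ℝ|
                  ≤ ‖gradient H a - gradient H m‖ * ‖w - z‖ := abs_real_inner_le_norm _ _
                _ = ‖gradient H m - gradient H a‖ * ‖w - z‖ := by rw [norm_sub_rev]
          have h3 : |N| / ‖w - z‖ ≤ ‖H w - H z - fderiv ℝ H a (w - z)‖ / ‖w - z‖
              + ‖gradient H m - gradient H a‖ := by
            have h4 : |N| / ‖w - z‖ ≤ (‖H w - H z - fderiv ℝ H a (w - z)‖
                + ‖gradient H m - gradient H a‖ * ‖w - z‖) / ‖w - z‖ := by gcongr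
            rwa [add_div, mul_div_assoc, div_self (ne_of_gt hnorm), mul_one] at h4
          simp only [hD]
          linarith
      have hDto : Filter.Tendsto D (nhds (a, a)) (nhds 0) := by
        have hpart1 : Filter.Tendsto
            (fun p : EuclideanSpace ℝ (Fin n) × EuclideanSpace ℝ (Fin n) =>
              2 * ‖gradient H ((1 / 2 : ℝ) • (p.1 + p.2)) - gradient H a‖)
            (nhds (a, a)) (nhds 0) := by
          have hmq : (1 / 2 : ℝ) • (a + a) = a := by
            rw [← two_smul ℝ a, smul_smul]; norm_num
          have h1 : Filter.Tendsto
              (fun p : EuclideanSpace ℝ (Fin n) × EuclideanSpace ℝ (Fin n) =>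
                gradient H ((1 / 2 : ℝ) • (p.1 + p.2)))
              (nhds (a, a)) (nhds (gradient H a)) := by
            simpa only [hmq] using hmid.tendsto (a, a)
          have h2 := tendsto_iff_norm_sub_tendsto_zero.mp h1
          simpa using h2.const_mul 2
        have hpart2 : Filter.Tendsto
            (fun p : EuclideanSpace ℝ (Fin n) × EuclideanSpace ℝ (Fin n) =>
              ‖H p.2 - H p.1 - fderiv ℝ H a (p.2 - p.1)‖ / ‖p.2 - p.1‖)
            (nhds (a, a)) (nhds 0) := by
          have hlo := hstrict.isLittleO
          have hswap : Filter.Tendsto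
              (Prod.swap : _ → EuclideanSpace ℝ (Fin n) × EuclideanSpace ℝ (Fin n))
              (nhds (a, a)) (nhds (a, a)) := by
            have h := (continuous_swap :
              Continuous (Prod.swap : (EuclideanSpace ℝ (Fin n) × EuclideanSpace ℝ (Fin n)) →
                EuclideanSpace ℝ (Fin n) × EuclideanSpace ℝ (Fin n))).tendsto (a, a)
            simpa using h
          have hlo2 := hlo.comp_tendsto hswap
          simp only [Function.comp_def, Prod.fst_swap, Prod.snd_swap] at hlo2
          exact hlo2.norm_left.norm_right.tendsto_div_nhds_zero
        have h := hpart1.add hpart2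
        simp only [add_zero] at h
        exact h
      have htend : Filter.Tendsto
          (fun p : EuclideanSpace ℝ (Fin n) × EuclideanSpace ℝ (Fin n) => G p.1 p.2)
          (nhds (a, a)) (nhds (gradient H a)) := by
        rw [tendsto_iff_norm_sub_tendsto_zero]
        exact squeeze_zero (fun p => norm_nonneg _) hbound hDto
      unfold ContinuousAt
      simpa [hGdiag] using htend
    · -- off-diagonal
      have hU : IsOpen {p : EuclideanSpace ℝ (Fin n) × EuclideanSpace ℝ (Fin n) | p.1 ≠ p.2} :=
        isOpen_ne_fun continuous_fst continuous_snd
      have hGc : ContinuousAt (fun p : EuclideanSpace ℝ (Fin n) × EuclideanSpace ℝ (Fin n) =>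
          gradient H ((1 / 2 : ℝ) • (p.1 + p.2))
            + ((H p.2 - H p.1 - ⟪gradient H ((1 / 2 : ℝ) • (p.1 + p.2)), p.2 - p.1⟫_ℝ)
                / ‖p.2 - p.1‖ ^ 2) • (p.2 - p.1)) q := by
        have hcont := hH.continuous
        have hsub : Continuous
            (fun p : EuclideanSpace ℝ (Fin n) × EuclideanSpace ℝ (Fin n) => p.2 - p.1) :=
          continuous_snd.sub continuous_fst
        refine hmid.continuousAt.add (ContinuousAt.fun_smul ?_ hsub.continuousAt)
        refine ContinuousAt.div ?_ ?_ ?_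
        · exact (((hcont.comp continuous_snd).sub (hcont.comp continuous_fst)).sub
            (hmid.inner hsub)).continuousAt
        · exact ((hsub.norm).pow 2).continuousAt
        · exact pow_ne_zero _ (norm_ne_zero_iff.mpr (sub_ne_zero.mpr (Ne.symm hq)))
      refine hGc.congr ?_
      filter_upwards [hU.mem_nhds hq] with p hp
      exact (hGne p.1 p.2 hp).symm
  · -- mean value property
    intro z w
    by_cases h : z = w
    · subst h
      simp [hGdiag]
    · rw [hGne z w h, inner_add_left, real_inner_smul_left, real_inner_self_eq_norm_sq,
        div_mul_cancel₀]
      · ring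
      · exact pow_ne_zero _ (norm_ne_zero_iff.mpr (sub_ne_zero.mpr (Ne.symm h)))
end

section
/- Let n ∈ ℕ, let G : ℝⁿ × ℝⁿ → ℝⁿ be continuously differentiable, let M = {(z, w) ∈ ℝⁿ × ℝⁿ : G(z, w) ≠ 0}, and let f̄ : ℝⁿ × ℝⁿ → ℝⁿ and γ̄ : M → ℝ be continuously differentiable on M. Let z₀ ∈ ℝⁿ with G(z₀, z₀) ≠ 0. Then there exist δ > 0 and a continuously differentiable map Ψ : {(z, τ) ∈ ℝⁿ × ℝ : ‖(z − z₀, τ)‖ < δ} → ℝⁿ such that for all such (z, τ): (z, Ψ(z, τ)) ∈ M, Ψ(z, 0) agrees with z at (z₀, 0) in the sense Ψ(z₀, 0) = z₀, and Ψ(z, τ) = z + τ [ γ̄(z, Ψ(z, τ)) G(z, Ψ(z, τ)) + (I − G(z,Ψ(z,τ)) G(z,Ψ(z,τ))ᵀ/‖G(z,Ψ(z,τ))‖²) f̄(z, Ψ(z, τ)) ]. -/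
open Matrix


private theorem aux_ift {n : ℕ} (g : ((Fin n → ℝ) × (Fin n → ℝ)) → (Fin n → ℝ))
    (z₀ : Fin n → ℝ) (hg : ContDiffAt ℝ 1 g (z₀, z₀)) :
    ∃ Ψ : (Fin n → ℝ) × ℝ → Fin n → ℝ, ContDiffAt ℝ 1 Ψ (z₀, 0) ∧ Ψ (z₀, 0) = z₀ ∧
      ∀ᶠ x in nhds ((z₀, 0) : (Fin n → ℝ) × ℝ), Ψ x = x.1 + x.2 • g (x.1, Ψ x) := by
  classical
  set H : (((Fin n → ℝ) × ℝ) × (Fin n → ℝ)) → (((Fin n → ℝ) × ℝ) × (Fin n → ℝ)) :=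
    fun x => (x.1, x.2 - x.1.1 - x.1.2 • g (x.1.1, x.2)) with hH_def
  set a : ((Fin n → ℝ) × ℝ) × (Fin n → ℝ) := ((z₀, (0 : ℝ)), z₀) with ha_def
  have hgcomp : ContDiffAt ℝ 1 (fun x : ((Fin n → ℝ) × ℝ) × (Fin n → ℝ) =>
      g (x.1.1, x.2)) a :=
    hg.comp a ((contDiff_fst.fst.prodMk contDiff_snd).contDiffAt)
  have hHcd : ContDiffAt ℝ 1 H a :=
    contDiffAt_fst.prodMk
      ((contDiffAt_snd.sub contDiffAt_fst.fst).sub ((contDiffAt_fst.snd).smul hgcomp))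
  set c : Fin n → ℝ := g (z₀, z₀) with hc_def
  set F1 := ContinuousLinearMap.fst ℝ ((Fin n → ℝ) × ℝ) (Fin n → ℝ) with hF1
  set F2 := ContinuousLinearMap.snd ℝ ((Fin n → ℝ) × ℝ) (Fin n → ℝ) with hF2
  set P1 := ContinuousLinearMap.fst ℝ (Fin n → ℝ) ℝ with hP1
  set P2 := ContinuousLinearMap.snd ℝ (Fin n → ℝ) ℝ with hP2
  set L := F1.prod (F2 - P1.comp F1 - (P2.comp F1).smulRight c) with hL_def
  set L' := F1.prod (F2 + P1.comp F1 + (P2.comp F1).smulRight c) with hL'_def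
  have hinv1 : Function.LeftInverse L' L := by
    intro x
    simp only [hL_def, hL'_def, hF1, hF2, hP1, hP2, ContinuousLinearMap.prod_apply,
      ContinuousLinearMap.coe_fst', ContinuousLinearMap.coe_snd',
      ContinuousLinearMap.sub_apply, ContinuousLinearMap.add_apply,
      ContinuousLinearMap.comp_apply, ContinuousLinearMap.smulRight_apply]
    refine Prod.ext rfl ?_
    module
  have hinv2 : Function.RightInverse L' L := by
    intro x
    simp only [hL_def, hL'_def, hF1, hF2, hP1, hP2, ContinuousLinearMap.prod_apply,
      ContinuousLinearMap.coe_fst', ContinuousLinearMap.coe_snd',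
      ContinuousLinearMap.sub_apply, ContinuousLinearMap.add_apply,
      ContinuousLinearMap.comp_apply, ContinuousLinearMap.smulRight_apply]
    refine Prod.ext rfl ?_
    module
  set E := ContinuousLinearEquiv.equivOfInverse L L' hinv1 hinv2 with hE_def
  have hsm : HasFDerivAt (fun x : ((Fin n → ℝ) × ℝ) × (Fin n → ℝ) =>
      x.1.2 • g (x.1.1, x.2)) ((P2.comp F1).smulRight c) a := by
    have h1 : HasFDerivAt (fun x : ((Fin n → ℝ) × ℝ) × (Fin n → ℝ) => x.1.2)
        (P2.comp F1) a := hasFDerivAt_fst.snd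
    have h2 := (hgcomp.differentiableAt one_ne_zero).hasFDerivAt
    have h3 := h1.smul h2
    have hz : a.1.2 = (0 : ℝ) := rfl
    rw [hz, zero_smul, zero_add] at h3
    exact h3
  have hF' : HasFDerivAt H (E : (((Fin n → ℝ) × ℝ) × (Fin n → ℝ)) →L[ℝ]
      (((Fin n → ℝ) × ℝ) × (Fin n → ℝ))) a := by
    have h2 : HasFDerivAt (fun x : ((Fin n → ℝ) × ℝ) × (Fin n → ℝ) =>
        x.2 - x.1.1 - x.1.2 • g (x.1.1, x.2))
        (F2 - P1.comp F1 - (P2.comp F1).smulRight c) a :=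
      (hasFDerivAt_snd.sub hasFDerivAt_fst.fst).sub hsm
    exact hasFDerivAt_fst.prodMk h2
  set Φ := hHcd.localInverse hF' one_ne_zero with hΦ_def
  have hs : HasStrictFDerivAt H (E : _ →L[ℝ] _) a := hHcd.hasStrictFDerivAt' hF' one_ne_zero
  have heq : ∀ᶠ y in nhds (H a), H (Φ y) = y := hs.eventually_right_inverse
  have hΦa : Φ (H a) = a := hHcd.localInverse_apply_image hF' one_ne_zero
  have hΦcd : ContDiffAt ℝ 1 Φ (H a) := hHcd.to_localInverse hF' one_ne_zero
  have hHa : H a = (((z₀ : Fin n → ℝ), (0 : ℝ)), (0 : Fin n → ℝ)) := by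
    simp [hH_def, ha_def]
  set j : (Fin n → ℝ) × ℝ → ((Fin n → ℝ) × ℝ) × (Fin n → ℝ) := fun x => (x, 0) with hj_def
  have hjz : j ((z₀, 0) : (Fin n → ℝ) × ℝ) = H a := by rw [hHa]
  have hjcd : ContDiff ℝ 1 j := contDiff_id.prodMk contDiff_const
  refine ⟨fun x => (Φ (j x)).2, ?_, ?_, ?_⟩
  · have h1 : ContDiffAt ℝ 1 Φ (j ((z₀, 0) : (Fin n → ℝ) × ℝ)) := hjz ▸ hΦcd
    exact contDiffAt_snd.comp _ (h1.comp _ hjcd.contDiffAt)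
  · show (Φ (j ((z₀, 0) : (Fin n → ℝ) × ℝ))).2 = z₀
    rw [hjz, hΦa]
  · have hjt : Filter.Tendsto j (nhds ((z₀, 0) : (Fin n → ℝ) × ℝ)) (nhds (H a)) := by
      rw [← hjz]; exact hjcd.continuous.continuousAt
    filter_upwards [hjt.eventually heq] with x h1
    have hfst : (Φ (j x)).1 = x := congrArg Prod.fst h1
    have hsnd := congrArg Prod.snd h1
    simp only [hH_def, hj_def] at hsnd
    rw [hfst] at hsnd
    rw [sub_sub] at hsnd
    exact sub_eq_zero.mp hsnd

private theorem aux_comp_pt {n : ℕ} {X : Type*} [NormedAddCommGroup X] [NormedSpace ℝ X]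
    {F : X → Fin n → ℝ} {x : X} (hF : ContDiffAt ℝ 1 F x) (i : Fin n) :
    ContDiffAt ℝ 1 (fun q => F q i) x := by
  have := (ContinuousLinearMap.proj (R := ℝ) (φ := fun _ : Fin n => ℝ) i).contDiff.contDiffAt.comp
    x hF
  exact this

private theorem aux_dot {n : ℕ} {X : Type*} [NormedAddCommGroup X] [NormedSpace ℝ X]
    {F1 F2 : X → Fin n → ℝ} {x : X} (h1 : ContDiffAt ℝ 1 F1 x) (h2 : ContDiffAt ℝ 1 F2 x) :
    ContDiffAt ℝ 1 (fun q => F1 q ⬝ᵥ F2 q) x := by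
  simp only [dotProduct]
  exact ContDiffAt.sum fun i _ => (aux_comp_pt h1 i).mul (aux_comp_pt h2 i)

private theorem aux_vecMulVec_mulVec {n : ℕ} (u v f : Fin n → ℝ) :
    vecMulVec u v *ᵥ f = (v ⬝ᵥ f) • u := by
  ext i
  simp only [Matrix.mulVec, dotProduct, vecMulVec_apply, Pi.smul_apply,
    smul_eq_mul, Finset.sum_mul, Finset.mul_sum]
  exact Finset.sum_congr rfl fun j _ => by ring

private theorem aux_proj_mulVec {n : ℕ} (u f : Fin n → ℝ) (c : ℝ) :
    ((1 : Matrix (Fin n) (Fin n) ℝ) - c • vecMulVec u u) *ᵥ f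
      = f - (c * (u ⬝ᵥ f)) • u := by
  rw [Matrix.sub_mulVec, Matrix.one_mulVec, Matrix.smul_mulVec,
    aux_vecMulVec_mulVec, smul_smul]


/-- Local well-posedness of the discrete gradient scheme near a point where
the discrete gradient does not vanish (via the implicit function theorem).  Squared
Euclidean norms `‖v‖²` are written as dot products `v ⬝ᵥ v`, and `I − v vᵀ/‖v‖²` is the
matrix `1 - (v ⬝ᵥ v)⁻¹ • vecMulVec v v`. -/
theorem discrete_gradient_scheme_locally_well_posed
    {n : ℕ}
    (G : (Fin n → ℝ) × (Fin n → ℝ) → Fin n → ℝ)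
    (hG : ContDiff ℝ 1 G)
    (M : Set ((Fin n → ℝ) × (Fin n → ℝ)))
    (hM : M = {q | G q ≠ 0})
    (fbar : (Fin n → ℝ) × (Fin n → ℝ) → Fin n → ℝ)
    (hf : ContDiffOn ℝ 1 fbar M)
    (γbar : (Fin n → ℝ) × (Fin n → ℝ) → ℝ)
    (hγ : ContDiffOn ℝ 1 γbar M)
    (z₀ : Fin n → ℝ) (hz₀ : G (z₀, z₀) ≠ 0) :
    ∃ δ > (0 : ℝ), ∃ Ψ : (Fin n → ℝ) × ℝ → Fin n → ℝ,
      ContDiffOn ℝ 1 Ψ {q : (Fin n → ℝ) × ℝ | ‖((q.1 - z₀ : Fin n → ℝ), q.2)‖ < δ}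
      ∧ Ψ (z₀, 0) = z₀
      ∧ ∀ z : Fin n → ℝ, ∀ τ : ℝ, ‖((z - z₀ : Fin n → ℝ), τ)‖ < δ →
          (z, Ψ (z, τ)) ∈ M
          ∧ Ψ (z, τ) = z + τ •
              (γbar (z, Ψ (z, τ)) • G (z, Ψ (z, τ))
                + ((1 : Matrix (Fin n) (Fin n) ℝ)
                    - (G (z, Ψ (z, τ)) ⬝ᵥ G (z, Ψ (z, τ)))⁻¹
                      • vecMulVec (G (z, Ψ (z, τ))) (G (z, Ψ (z, τ)))) *ᵥ
                  fbar (z, Ψ (z, τ))) := by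
  classical
  set g : (Fin n → ℝ) × (Fin n → ℝ) → Fin n → ℝ := fun q =>
    γbar q • G q + (fbar q - ((G q ⬝ᵥ G q)⁻¹ * (G q ⬝ᵥ fbar q)) • G q) with hg_def
  have hM_open : IsOpen M := by
    rw [hM]; exact isOpen_ne.preimage hG.continuous
  have hq₀M : ((z₀, z₀) : (Fin n → ℝ) × (Fin n → ℝ)) ∈ M := by
    rw [hM]; exact hz₀
  have hMnhds : M ∈ nhds ((z₀, z₀) : (Fin n → ℝ) × (Fin n → ℝ)) := hM_open.mem_nhds hq₀M
  have hGat : ContDiffAt ℝ 1 G (z₀, z₀) := hG.contDiffAt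
  have hγat : ContDiffAt ℝ 1 γbar (z₀, z₀) := hγ.contDiffAt hMnhds
  have hfat : ContDiffAt ℝ 1 fbar (z₀, z₀) := hf.contDiffAt hMnhds
  have hne : (G (z₀, z₀) ⬝ᵥ G (z₀, z₀)) ≠ 0 := fun h => hz₀ (dotProduct_self_eq_zero.mp h)
  have hgat : ContDiffAt ℝ 1 g (z₀, z₀) :=
    (hγat.smul hGat).add
      (hfat.sub ((((aux_dot hGat hGat).inv hne).mul (aux_dot hGat hfat)).smul hGat))
  obtain ⟨Ψ, hΨcd, hΨ₀, hev⟩ := aux_ift g z₀ hgat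
  -- eventually `G (x.1, Ψ x) ≠ 0`
  have hev2 : ∀ᶠ x in nhds ((z₀, 0) : (Fin n → ℝ) × ℝ), G (x.1, Ψ x) ≠ 0 := by
    have hcont : ContinuousAt (fun x : (Fin n → ℝ) × ℝ => G (x.1, Ψ x)) (z₀, 0) :=
      hG.continuous.continuousAt.comp (continuousAt_fst.prodMk hΨcd.continuousAt)
    have hval : (fun x : (Fin n → ℝ) × ℝ => G (x.1, Ψ x)) (z₀, 0) ≠ 0 := by
      simpa [hΨ₀] using hz₀
    exact hcont.eventually_ne hval
  obtain ⟨u, hu_nhds, hu⟩ := hΨcd.contDiffOn le_rfl (by simp)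
  have hall : {x : (Fin n → ℝ) × ℝ | Ψ x = x.1 + x.2 • g (x.1, Ψ x) ∧ G (x.1, Ψ x) ≠ 0} ∩ u
      ∈ nhds ((z₀, 0) : (Fin n → ℝ) × ℝ) :=
    Filter.inter_mem (by filter_upwards [hev, hev2] with x h1 h2; exact ⟨h1, h2⟩) hu_nhds
  obtain ⟨δ, hδpos, hδ⟩ := Metric.mem_nhds_iff.mp hall
  have hset : {q : (Fin n → ℝ) × ℝ | ‖((q.1 - z₀ : Fin n → ℝ), q.2)‖ < δ}
      = Metric.ball ((z₀, 0) : (Fin n → ℝ) × ℝ) δ := by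
    ext q
    simp [Metric.mem_ball, Prod.dist_eq, dist_eq_norm, Prod.norm_def, sub_zero]
  refine ⟨δ, hδpos, Ψ, ?_, hΨ₀, ?_⟩
  · rw [hset]
    exact hu.mono fun x hx => (hδ hx).2
  · intro z τ hzτ
    have hball : ((z, τ) : (Fin n → ℝ) × ℝ) ∈ Metric.ball ((z₀, 0) : (Fin n → ℝ) × ℝ) δ := by
      have : ((z, τ) : (Fin n → ℝ) × ℝ) ∈
          {q : (Fin n → ℝ) × ℝ | ‖((q.1 - z₀ : Fin n → ℝ), q.2)‖ < δ} := hzτ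
      rwa [hset] at this
    obtain ⟨⟨h1, h2⟩, _⟩ := hδ hball
    refine ⟨by rw [hM]; exact h2, ?_⟩
    rw [aux_proj_mulVec]
    exact h1
end
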